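/- Let Ω₁ and Ω₂ be n×n real symmetric positive definite matrices with Ω₂ ⪯ Ω₁ (Loewner order), let b > 0, and let θ₁, θ₂ > 0 be the unique positive solutions of γ(Ω₁, θ₁) = b and γ(Ω₂, θ₂) = b with Ω₁ − θ₁Iₙ and Ω₂ − θ₂Iₙ positive definite. Then θ₁ ≥ θ₂; that is, a more informative (larger, in the Loewner order) information matrix yields a larger risk sensitivity parameter for the same tolerance b. -/

import Mathlib

/-!
Diagonalising `Ω = U diag(λ) Uᵀ` gives `γ(Ω, θ) = ½ ∑ᵢ g(λᵢ, θ)` with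
`g(l, θ) = (1 - θ/l)⁻¹ - 1 + log (1 - θ/l)` (`gammaTerm` below) and `∂g/∂θ = θ / (l - θ)²`, so
`∂γ/∂θ = (θ/2) tr((Ω - θI)⁻²)`. This is positive for `θ > 0`, so `γ(Ω, ·)` is strictly increasing.
Since `Ω₂ ⪯ Ω₁` gives `(Ω₁ - θI)⁻¹ ⪯ (Ω₂ - θI)⁻¹`, and the trace of the square is monotone on
positive semidefinite matrices, `∂γ/∂θ` is smaller for `Ω₁`; as `γ(·, 0) = 0`, we get
`γ(Ω₁, θ) ≤ γ(Ω₂, θ)`. Were `θ₁ < θ₂`, then `b = γ(Ω₁, θ₁) < γ(Ω₁, θ₂) ≤ γ(Ω₂, θ₂) = b`.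
-/

/-- The function γ(Ω, θ) = (1/2)(tr((I − θΩ⁻¹)⁻¹ − I) + log det(I − θΩ⁻¹)). -/
noncomputable def gammaFn {n : ℕ} (Ω : Matrix (Fin n) (Fin n) ℝ) (θ : ℝ) : ℝ :=
  (1 / 2) * (Matrix.trace ((1 - θ • Ω⁻¹)⁻¹ - 1) + Real.log ((1 - θ • Ω⁻¹).det))

open Matrix Unitary
open scoped ComplexOrder

namespace Matrix

variable {ι 𝕜 : Type*} [RCLike 𝕜]

lemma PosDef.of_posSemidef_sub {A B : Matrix ι ι 𝕜} (hA : A.PosDef) (hAB : (B - A).PosSemidef) :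
    B.PosDef := by
  simpa using PosDef.posSemidef_add hAB hA

variable [DecidableEq ι]

lemma PosDef.sub_smul_one_of_le {A : Matrix ι ι 𝕜} {s t : ℝ} (hs : (A - s • 1).PosDef)
    (hts : t ≤ s) : (A - t • 1).PosDef :=
  hs.of_posSemidef_sub <| by
    rw [sub_sub_sub_cancel_left, ← sub_smul]
    exact PosSemidef.one.smul (sub_nonneg.2 hts)

variable [Fintype ι]

section conjStarAlgAut

variable (u : unitary (Matrix ι ι 𝕜))

lemma trace_conjStarAlgAut (A : Matrix ι ι 𝕜) :
    (conjStarAlgAut 𝕜 _ u A).trace = A.trace := by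
  rw [conjStarAlgAut_apply, trace_mul_cycle, coe_star_mul_self, one_mul]

lemma det_conjStarAlgAut (A : Matrix ι ι 𝕜) :
    (conjStarAlgAut 𝕜 _ u A).det = A.det := by
  rw [conjStarAlgAut_apply, det_mul_comm, ← mul_assoc, coe_star_mul_self, one_mul]

lemma conjStarAlgAut_nonsing_inv (A : Matrix ι ι 𝕜) :
    conjStarAlgAut 𝕜 _ u A⁻¹ = (conjStarAlgAut 𝕜 _ u A)⁻¹ := by
  have hu : (u : Matrix ι ι 𝕜)⁻¹ = star (u : Matrix ι ι 𝕜) :=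
    inv_eq_left_inv (coe_star_mul_self u)
  have hsu : (star (u : Matrix ι ι 𝕜))⁻¹ = u := inv_eq_left_inv (coe_mul_star_self u)
  simp only [conjStarAlgAut_apply, mul_inv_rev, hu, hsu, mul_assoc]

lemma posDef_conjStarAlgAut_iff {A : Matrix ι ι 𝕜} :
    (conjStarAlgAut 𝕜 _ u A).PosDef ↔ A.PosDef := by
  rw [conjStarAlgAut_apply]
  exact IsUnit.posDef_star_right_conjugate_iff Unitary.isUnit_coe

end conjStarAlgAut

lemma inv_diagonal_of_ne_zero {K : Type*} [Field K] {d : ι → K} (hd : ∀ i, d i ≠ 0) :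
    (diagonal d)⁻¹ = diagonal fun i => (d i)⁻¹ := by
  refine inv_eq_left_inv ?_
  rw [diagonal_mul_diagonal, ← diagonal_one]
  exact congrArg diagonal (funext fun i => inv_mul_cancel₀ (hd i))

lemma PosSemidef.trace_mul_nonneg {A B : Matrix ι ι 𝕜} (hA : A.PosSemidef) (hB : B.PosSemidef) :
    0 ≤ (A * B).trace := by
  open scoped MatrixOrder in
  obtain ⟨S, hS, rfl⟩ : ∃ S : Matrix ι ι 𝕜, Sᴴ = S ∧ A = S * S :=
    ⟨CFC.sqrt A, (CFC.sqrt_nonneg A).posSemidef.isHermitian,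
      (CFC.sqrt_mul_sqrt_self A hA.nonneg).symm⟩
  rw [mul_assoc, trace_mul_comm, mul_assoc, ← mul_assoc]
  nth_rewrite 2 [← hS]
  exact (hB.mul_mul_conjTranspose_same S).trace_nonneg

lemma PosSemidef.trace_mul_self_le {A B : Matrix ι ι 𝕜} (hA : A.PosSemidef)
    (hAB : (B - A).PosSemidef) : (A * A).trace ≤ (B * B).trace := by
  have hB : B.PosSemidef := by simpa using hAB.add hA
  have key : ((B - A) * (B + A)).trace = (B * B).trace - (A * A).trace := by
    rw [sub_mul, mul_add, mul_add, trace_sub, trace_add, trace_add, trace_mul_comm A B]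
    ring
  exact sub_nonneg.1 (key ▸ PosSemidef.trace_mul_nonneg hAB (hB.add hA))

lemma PosDef.inv_sub_inv_posSemidef {A B : Matrix ι ι 𝕜} (hA : A.PosDef)
    (hAB : (B - A).PosSemidef) : (A⁻¹ - B⁻¹).PosSemidef := by
  have hB : B.PosDef := hA.of_posSemidef_sub hAB
  have hA₁ : A * A⁻¹ = 1 := mul_nonsing_inv _ (isUnit_iff_ne_zero.2 hA.det_pos.ne')
  have hA₂ : A⁻¹ * A = 1 := nonsing_inv_mul _ (isUnit_iff_ne_zero.2 hA.det_pos.ne')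
  have hB₁ : (B - A) * B⁻¹ = 1 - A * B⁻¹ := by
    rw [sub_mul, mul_nonsing_inv _ (isUnit_iff_ne_zero.2 hB.det_pos.ne')]
  have hB₂ : B⁻¹ * (B - A) = 1 - B⁻¹ * A := by
    rw [mul_sub, nonsing_inv_mul _ (isUnit_iff_ne_zero.2 hB.det_pos.ne')]
  -- a congruence of the positive semidefinite `C + Cᴴ A⁻¹ C`, where `C = B - A`
  have key : A⁻¹ - B⁻¹ = B⁻¹ * ((B - A) + (B - A)ᴴ * A⁻¹ * (B - A)) * B⁻¹ := by
    rw [hAB.isHermitian.eq]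
    calc A⁻¹ - B⁻¹ = (1 - B⁻¹ * A) * B⁻¹ + (1 - B⁻¹ * A) * A⁻¹ * (1 - A * B⁻¹) := by
          simp only [sub_mul, mul_sub, one_mul, mul_one, mul_assoc, hA₁]
          simp only [← mul_assoc, hA₂, one_mul]
          abel
      _ = B⁻¹ * ((B - A) + (B - A) * A⁻¹ * (B - A)) * B⁻¹ := by
          rw [← hB₁, ← hB₂]
          noncomm_ring
  have hBinv : B⁻¹ᴴ = B⁻¹ := hB.inv.isHermitian.eq
  have h := (hAB.add (hA.inv.posSemidef.conjTranspose_mul_mul_same (B - A)))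
    |>.mul_mul_conjTranspose_same B⁻¹
  rwa [hBinv, ← key] at h

lemma PosDef.trace_inv_mul_inv_le {A B : Matrix ι ι 𝕜} (hA : A.PosDef)
    (hAB : (B - A).PosSemidef) : (B⁻¹ * B⁻¹).trace ≤ (A⁻¹ * A⁻¹).trace :=
  PosSemidef.trace_mul_self_le (hA.of_posSemidef_sub hAB).inv.posSemidef
    (hA.inv_sub_inv_posSemidef hAB)

end Matrix

namespace Matrix.IsHermitian

variable {ι : Type*} [Fintype ι] [DecidableEq ι] {A : Matrix ι ι ℝ} (hA : A.IsHermitian)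

lemma conjStarAlgAut_diagonal_eigenvalues :
    conjStarAlgAut ℝ _ hA.eigenvectorUnitary (diagonal hA.eigenvalues) = A := by
  simpa using hA.spectral_theorem.symm

lemma sub_smul_one_eq_conjStarAlgAut_diagonal (θ : ℝ) :
    A - θ • 1 = conjStarAlgAut ℝ _ hA.eigenvectorUnitary
      (diagonal fun i => hA.eigenvalues i - θ) := by
  conv_lhs => rw [← hA.conjStarAlgAut_diagonal_eigenvalues]
  rw [← map_one (conjStarAlgAut ℝ _ hA.eigenvectorUnitary), ← map_smul, ← map_sub,
    ← diagonal_one, ← diagonal_smul, diagonal_sub]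
  simp

lemma lt_eigenvalues_of_posDef_sub_smul_one {θ : ℝ} (h : (A - θ • 1).PosDef) (i : ι) :
    θ < hA.eigenvalues i := by
  rw [hA.sub_smul_one_eq_conjStarAlgAut_diagonal, posDef_conjStarAlgAut_iff,
    posDef_diagonal_iff] at h
  exact sub_pos.1 (h i)

lemma trace_inv_mul_inv_sub_smul_one {θ : ℝ} (hθ : ∀ i, θ ≠ hA.eigenvalues i) :
    ((A - θ • 1)⁻¹ * (A - θ • 1)⁻¹).trace = ∑ i, ((hA.eigenvalues i - θ) ^ 2)⁻¹ := by
  have hne : ∀ i, hA.eigenvalues i - θ ≠ 0 := fun i => sub_ne_zero.2 (hθ i).symm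
  rw [hA.sub_smul_one_eq_conjStarAlgAut_diagonal, ← conjStarAlgAut_nonsing_inv, ← map_mul,
    trace_conjStarAlgAut, inv_diagonal_of_ne_zero hne, diagonal_mul_diagonal, trace_diagonal]
  simp_rw [sq, mul_inv]

end Matrix.IsHermitian

noncomputable def gammaTerm (l θ : ℝ) : ℝ := (1 - θ / l)⁻¹ - 1 + Real.log (1 - θ / l)

lemma hasDerivAt_gammaTerm {l θ : ℝ} (hl : l ≠ 0) (hθ : θ ≠ l) :
    HasDerivAt (gammaTerm l) (θ / (l - θ) ^ 2) θ := by
  have hlθ : l - θ ≠ 0 := sub_ne_zero.2 hθ.symm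
  have hc : 1 - θ / l ≠ 0 := by rwa [one_sub_div hl, div_ne_zero_iff, and_iff_left hl]
  have h : HasDerivAt (fun t => 1 - t / l) (-(1 / l)) θ := by
    simpa [one_div] using ((hasDerivAt_id θ).div_const l).const_sub 1
  refine (((h.inv hc).sub_const 1).add (h.log hc)).congr_deriv ?_
  field_simp
  ring

section gammaFn

variable {n : ℕ}

open Filter Topology

lemma gammaFn_zero (Ω : Matrix (Fin n) (Fin n) ℝ) : gammaFn Ω 0 = 0 := by
  simp [gammaFn]

lemma gammaFn_conjStarAlgAut (u : unitary (Matrix (Fin n) (Fin n) ℝ))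
    (A : Matrix (Fin n) (Fin n) ℝ) (θ : ℝ) : gammaFn (conjStarAlgAut ℝ _ u A) θ = gammaFn A θ := by
  rw [gammaFn, ← conjStarAlgAut_nonsing_inv, ← map_one (conjStarAlgAut ℝ _ u), ← map_smul,
    ← map_sub, ← conjStarAlgAut_nonsing_inv, ← map_sub, trace_conjStarAlgAut, det_conjStarAlgAut,
    gammaFn]

lemma gammaFn_diagonal {d : Fin n → ℝ} {θ : ℝ} (hd : ∀ i, d i ≠ 0) (hθ : ∀ i, θ ≠ d i) :
    gammaFn (diagonal d) θ = (1 / 2) * ∑ i, gammaTerm (d i) θ := by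
  have hne : ∀ i, 1 - θ / d i ≠ 0 := fun i h =>
    hθ i ((div_eq_one_iff_eq (hd i)).1 (sub_eq_zero.1 h).symm)
  have h : 1 - θ • (diagonal d)⁻¹ = diagonal fun i => 1 - θ / d i := by
    rw [inv_diagonal_of_ne_zero hd, ← diagonal_one, ← diagonal_smul, ← diagonal_sub]
    rfl
  rw [gammaFn, h, inv_diagonal_of_ne_zero hne, trace_sub, trace_diagonal, trace_one,
    det_diagonal, Real.log_prod fun i _ => hne i]
  simp only [gammaTerm, Finset.sum_add_distrib, Finset.sum_sub_distrib, Finset.sum_const,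
    Finset.card_univ, Fintype.card_fin, nsmul_eq_mul, mul_one]

lemma gammaFn_eq_sum_eigenvalues {Ω : Matrix (Fin n) (Fin n) ℝ} (hΩ : Ω.IsHermitian) {θ : ℝ}
    (hne : ∀ i, hΩ.eigenvalues i ≠ 0) (hθ : ∀ i, θ ≠ hΩ.eigenvalues i) :
    gammaFn Ω θ = (1 / 2) * ∑ i, gammaTerm (hΩ.eigenvalues i) θ := by
  conv_lhs => rw [← hΩ.conjStarAlgAut_diagonal_eigenvalues]
  rw [gammaFn_conjStarAlgAut, gammaFn_diagonal hne hθ]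

theorem hasDerivAt_gammaFn {Ω : Matrix (Fin n) (Fin n) ℝ} {t : ℝ} (ht : 0 ≤ t)
    (h : (Ω - t • 1).PosDef) :
    HasDerivAt (gammaFn Ω) (t / 2 * ((Ω - t • 1)⁻¹ * (Ω - t • 1)⁻¹).trace) t := by
  have hΩ : Ω.IsHermitian := by
    simpa using h.isHermitian.add (PosSemidef.one.smul ht).isHermitian
  have hlt := hΩ.lt_eigenvalues_of_posDef_sub_smul_one h
  have hsum : HasDerivAt (fun s => 1 / 2 * ∑ i, gammaTerm (hΩ.eigenvalues i) s)
      (1 / 2 * ∑ i, t / (hΩ.eigenvalues i - t) ^ 2) t :=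
    (HasDerivAt.fun_sum fun i _ =>
      hasDerivAt_gammaTerm (ht.trans_lt (hlt i)).ne' (hlt i).ne).const_mul _
  have heq : gammaFn Ω =ᶠ[𝓝 t] fun s => 1 / 2 * ∑ i, gammaTerm (hΩ.eigenvalues i) s := by
    filter_upwards [eventually_all.2 fun i => eventually_lt_nhds (hlt i)] with s hs
    exact gammaFn_eq_sum_eigenvalues hΩ (fun i => (ht.trans_lt (hlt i)).ne') fun i => (hs i).ne
  refine (hsum.congr_of_eventuallyEq heq).congr_deriv ?_
  rw [hΩ.trace_inv_mul_inv_sub_smul_one fun i => (hlt i).ne, Finset.mul_sum, Finset.mul_sum]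
  simp_rw [div_eq_mul_inv]
  ring_nf

theorem gammaFn_strictMonoOn [NeZero n] {Ω : Matrix (Fin n) (Fin n) ℝ} {T : ℝ}
    (hT : (Ω - T • 1).PosDef) : StrictMonoOn (gammaFn Ω) (Set.Icc 0 T) := by
  have hderiv (t : ℝ) (ht : t ∈ Set.Icc 0 T) := hasDerivAt_gammaFn ht.1 (hT.sub_smul_one_of_le ht.2)
  refine strictMonoOn_of_hasDerivWithinAt_pos (convex_Icc 0 T)
    (fun t ht => (hderiv t ht).continuousAt.continuousWithinAt)
    (fun t ht => (hderiv t (interior_subset ht)).hasDerivWithinAt) fun t ht => ?_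
  rw [interior_Icc] at ht
  set X := (Ω - t • 1)⁻¹
  have hX : X.PosDef := (hT.sub_smul_one_of_le ht.2.le).inv
  have hXX : (X * X).PosDef := by
    simpa only [hX.isHermitian.eq] using
      PosDef.conjTranspose_mul_self X (mulVec_injective_of_isUnit hX.isUnit)
  exact mul_pos (half_pos ht.1) hXX.trace_pos

theorem gammaFn_le_gammaFn_of_posSemidef_sub {Ω₁ Ω₂ : Matrix (Fin n) (Fin n) ℝ} {T : ℝ}
    (hT₀ : 0 ≤ T) (h : (Ω₁ - Ω₂).PosSemidef) (hT : (Ω₂ - T • 1).PosDef) :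
    gammaFn Ω₁ T ≤ gammaFn Ω₂ T := by
  have hpd₂ (t : ℝ) (ht : t ∈ Set.Icc 0 T) := hT.sub_smul_one_of_le ht.2
  have hpd₁ (t : ℝ) (ht : t ∈ Set.Icc 0 T) : (Ω₁ - t • 1).PosDef :=
    (hpd₂ t ht).of_posSemidef_sub (by rwa [sub_sub_sub_cancel_right])
  have hderiv (t : ℝ) (ht : t ∈ Set.Icc 0 T) :=
    (hasDerivAt_gammaFn ht.1 (hpd₂ t ht)).sub (hasDerivAt_gammaFn ht.1 (hpd₁ t ht))
  have hmono : MonotoneOn (fun t => gammaFn Ω₂ t - gammaFn Ω₁ t) (Set.Icc 0 T) := by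
    refine monotoneOn_of_hasDerivWithinAt_nonneg (convex_Icc 0 T)
      (fun t ht => (hderiv t ht).continuousAt.continuousWithinAt)
      (fun t ht => (hderiv t (interior_subset ht)).hasDerivWithinAt) fun t ht => ?_
    have ht' := interior_subset ht
    rw [← mul_sub]
    refine mul_nonneg (by linarith [ht'.1]) (sub_nonneg.2 ?_)
    exact PosDef.trace_inv_mul_inv_le (hpd₂ t ht') (by rwa [sub_sub_sub_cancel_right])
  simpa [gammaFn_zero] using hmono ⟨le_rfl, hT₀⟩ ⟨hT₀, le_rfl⟩ hT₀

end gammaFn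

theorem stmt7_general {n : ℕ} (Ω₁ Ω₂ : Matrix (Fin n) (Fin n) ℝ)
    (h21 : (Ω₁ - Ω₂).PosSemidef) (b : ℝ) (hb : 0 < b)
    (θ₁ θ₂ : ℝ) (hθ₁ : 0 < θ₁)
    (hpd₂ : (Ω₂ - θ₂ • (1 : Matrix (Fin n) (Fin n) ℝ)).PosDef)
    (hg₁ : gammaFn Ω₁ θ₁ = b) (hg₂ : gammaFn Ω₂ θ₂ = b) :
    θ₂ ≤ θ₁ := by
  by_contra! hlt
  obtain rfl | hn := eq_or_ne n 0
  · simp [← hg₁, gammaFn] at hb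
  have : NeZero n := ⟨hn⟩
  have hpd₁₂ : (Ω₁ - θ₂ • 1).PosDef := hpd₂.of_posSemidef_sub (by rwa [sub_sub_sub_cancel_right])
  have hmono : gammaFn Ω₁ θ₁ < gammaFn Ω₁ θ₂ :=
    gammaFn_strictMonoOn hpd₁₂ ⟨hθ₁.le, hlt.le⟩ ⟨(hθ₁.trans hlt).le, le_rfl⟩ hlt
  have hcmp : gammaFn Ω₁ θ₂ ≤ gammaFn Ω₂ θ₂ :=
    gammaFn_le_gammaFn_of_posSemidef_sub (hθ₁.trans hlt).le h21 hpd₂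
  linarith

theorem stmt7 {n : ℕ} (Ω₁ Ω₂ : Matrix (Fin n) (Fin n) ℝ)
    (h₁ : Ω₁.PosDef) (h₂ : Ω₂.PosDef)
    (h21 : (Ω₁ - Ω₂).PosSemidef) (b : ℝ) (hb : 0 < b)
    (θ₁ θ₂ : ℝ) (hθ₁ : 0 < θ₁) (hθ₂ : 0 < θ₂)
    (hpd₁ : (Ω₁ - θ₁ • (1 : Matrix (Fin n) (Fin n) ℝ)).PosDef)
    (hpd₂ : (Ω₂ - θ₂ • (1 : Matrix (Fin n) (Fin n) ℝ)).PosDef)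
    (hg₁ : gammaFn Ω₁ θ₁ = b) (hg₂ : gammaFn Ω₂ θ₂ = b) :
    θ₂ ≤ θ₁ :=
  stmt7_general Ω₁ Ω₂ h21 b hb θ₁ θ₂ hθ₁ hpd₂ hg₁ hg₂
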